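/- arXiv:2212.05872 — 4 statements merged into one kernel-verified Lean document; each statement's English description precedes it below -/
import Mathlib

section
/- Let H > 0 and let c : [0,H] → ℝ have finite pointwise total variation V on [0,H], with m ≤ c(y) ≤ M for all y ∈ [0,H]. Then there exists a sequence (cₙ) of step functions on [0,H] (each piecewise constant with finitely many pieces) such that cₙ → c uniformly on [0,H], the pointwise total variation of each cₙ on [0,H] is at most V, and inf_{[0,H]} c ≤ cₙ(y) ≤ sup_{[0,H]} c for all y ∈ [0,H] and all n. -/
/-!
Let `v t` be the variation of `c` on `[0, t]`. Marking the finitely many points where `v`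
crosses the levels `v 0 + j * ε`, together with `0` and `H`, `c` oscillates by at most `ε` on
each open gap between marked points. Composing `c` with the monotone map of `[0, H]` into itself
that fixes the marked points and sends each gap to its midpoint gives a step function within `ε`
of `c`; since this map is monotone, the composite has variation at most that of `c`, and its
values lie in `c '' [0, H]`.
-/

open Set MeasureTheory Filter

/-- `g` is a step function on `[0,H]`: there is a finite partition
`0 = p 0 < p 1 < ⋯ < p k = H` such that `g` is constant on each open subinterval. -/
def IsStepFunctionOn (H : ℝ) (g : ℝ → ℝ) : Prop :=
  ∃ (k : ℕ) (p v : ℕ → ℝ), 0 < k ∧ p 0 = 0 ∧ p k = H ∧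
    (∀ i < k, p i < p (i + 1)) ∧
    (∀ i < k, ∀ y ∈ Set.Ioo (p i) (p (i + 1)), g y = v i)

open Topology

theorem tendstoUniformlyOn_of_dist_le {ι α β : Type*} [PseudoMetricSpace β]
    {F : ι → α → β} {f : α → β} {p : Filter ι} {s : Set α} {ε : ι → ℝ}
    (hε : Tendsto ε p (𝓝 0))
    (h : ∀ i, ∀ y ∈ s, dist (f y) (F i y) ≤ ε i) : TendstoUniformlyOn F f p s := by
  rw [Metric.tendstoUniformlyOn_iff]
  intro δ hδ
  filter_upwards [hε.eventually (gt_mem_nhds hδ)] with i hi y hy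
  exact (h i y hy).trans_lt hi

theorem MonotoneOn.exists_finset_mem_Icc_of_lt_sub {v : ℝ → ℝ} {a b ε : ℝ}
    (hv : MonotoneOn v (Icc a b)) (hε : 0 < ε) :
    ∃ S : Finset ℝ, (S : Set ℝ) ⊆ Icc a b ∧
      ∀ x ∈ Icc a b, ∀ x' ∈ Icc a b, ε < v x' - v x → ∃ z ∈ S, z ∈ Icc x x' := by
  classical
  -- `τ j` is the last point where `v` is still below the level `v a + j * ε`; an increment of
  -- `v` larger than `ε` between `x` and `x'` crosses one of these levels.
  let lev : ℕ → Set ℝ := fun j => {t ∈ Icc a b | v t ≤ v a + j * ε}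
  let τ : ℕ → ℝ := fun j => sSup (lev j)
  let N := ⌈(v b - v a) / ε⌉₊
  refine ⟨((Finset.range (N + 1)).image τ).filter (· ∈ Icc a b), by simp [Set.subset_def],
    ?_⟩
  intro x hx x' hx' hvx
  have ha : a ∈ Icc a b := ⟨le_rfl, hx.1.trans hx.2⟩
  have hb : b ∈ Icc a b := ⟨hx.1.trans hx.2, le_rfl⟩
  have hvax : 0 ≤ (v x - v a) / ε := div_nonneg (sub_nonneg.2 (hv ha hx hx.1)) hε.le
  set j := ⌈(v x - v a) / ε⌉₊
  have hj_ge : v x ≤ v a + j * ε := by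
    have := (div_le_iff₀ hε).1 (Nat.le_ceil ((v x - v a) / ε)); linarith
  have hj_lt : v a + j * ε < v x' := by
    have h := Nat.ceil_lt_add_one hvax
    rw [div_add_one hε.ne', lt_div_iff₀ hε] at h
    linarith
  have hjN : j ≤ N := Nat.ceil_mono (div_le_div_of_nonneg_right
    (sub_le_sub_right (hv hx hb hx.2) _) hε.le)
  have hxτ : x ≤ τ j := le_csSup ⟨b, fun t ht => ht.1.2⟩ ⟨hx, hj_ge⟩
  have hτx' : τ j ≤ x' := by
    refine csSup_le ⟨x, hx, hj_ge⟩ fun t ht => ?_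
    by_contra! hlt
    exact (hj_lt.trans_le (hv hx' ht.1 hlt.le)).not_ge ht.2
  refine ⟨τ j, ?_, hxτ, hτx'⟩
  simp only [Finset.mem_filter, Finset.mem_image, Finset.mem_range]
  exact ⟨⟨j, Nat.lt_succ_of_le hjN, rfl⟩, hx.1.trans hxτ, hτx'.trans hx'.2⟩

theorem BoundedVariationOn.exists_finset_dist_le_of_disjoint_Icc {f : ℝ → ℝ} {a b ε : ℝ}
    (hf : BoundedVariationOn f (Icc a b)) (hε : 0 < ε) :
    ∃ S : Finset ℝ, (S : Set ℝ) ⊆ Icc a b ∧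
      ∀ x ∈ Icc a b, ∀ x' ∈ Icc a b, x ≤ x' → Disjoint (S : Set ℝ) (Icc x x') →
        dist (f x) (f x') ≤ ε := by
  rcases lt_or_ge b a with hba | hab
  · exact ⟨∅, by simp, fun x hx => absurd (hx.1.trans hx.2) hba.not_ge⟩
  have ha : a ∈ Icc a b := ⟨le_rfl, hab⟩
  have hlbv := hf.locallyBoundedVariationOn
  obtain ⟨S, hSab, hS⟩ :=
    (variationOnFromTo.monotoneOn hlbv ha).exists_finset_mem_Icc_of_lt_sub hε
  refine ⟨S, hSab, fun x hx x' hx' hxx' hdisj => ?_⟩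
  rw [dist_comm, Real.dist_eq]
  refine (variationOnFromTo.abs_sub_le_sub_of_le hlbv ha hx hx' hxx').trans (not_lt.1 ?_)
  intro hlt
  obtain ⟨z, hzS, hz⟩ := hS x hx x' hx' hlt
  exact hdisj.notMem_of_mem_left hzS hz

namespace Finset

noncomputable def lastLE (S : Finset ℝ) (y : ℝ) : ℝ := sSup {z ∈ (S : Set ℝ) | z ≤ y}

noncomputable def firstGE (S : Finset ℝ) (y : ℝ) : ℝ := sInf {z ∈ (S : Set ℝ) | y ≤ z}

/-- `y` itself if `y ∈ S`, otherwise the midpoint of the gap of `S` containing `y`. -/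
noncomputable def gapMidpoint (S : Finset ℝ) (y : ℝ) : ℝ := (S.lastLE y + S.firstGE y) / 2

variable {S : Finset ℝ} {a b y y' z : ℝ}

theorem le_lastLE (hz : z ∈ S) (hzy : z ≤ y) : z ≤ S.lastLE y :=
  le_csSup (S.finite_toSet.subset (sep_subset _ _)).bddAbove ⟨hz, hzy⟩

theorem firstGE_le (hz : z ∈ S) (hyz : y ≤ z) : S.firstGE y ≤ z :=
  csInf_le (S.finite_toSet.subset (sep_subset _ _)).bddBelow ⟨hz, hyz⟩

theorem lastLE_mem (hz : z ∈ S) (hzy : z ≤ y) : S.lastLE y ∈ S ∧ S.lastLE y ≤ y :=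
  Set.Nonempty.csSup_mem (s := {z ∈ (S : Set ℝ) | z ≤ y}) ⟨z, hz, hzy⟩
    (S.finite_toSet.subset (sep_subset _ _))

theorem firstGE_mem (hz : z ∈ S) (hyz : y ≤ z) : S.firstGE y ∈ S ∧ y ≤ S.firstGE y :=
  Set.Nonempty.csInf_mem (s := {z ∈ (S : Set ℝ) | y ≤ z}) ⟨z, hz, hyz⟩
    (S.finite_toSet.subset (sep_subset _ _))

theorem lastLE_le_lastLE (hz : z ∈ S) (hzy : z ≤ y) (hyy' : y ≤ y') :
    S.lastLE y ≤ S.lastLE y' :=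
  le_lastLE (lastLE_mem hz hzy).1 ((lastLE_mem hz hzy).2.trans hyy')

theorem firstGE_le_firstGE (hz : z ∈ S) (hyz : y' ≤ z) (hyy' : y ≤ y') :
    S.firstGE y ≤ S.firstGE y' :=
  firstGE_le (firstGE_mem hz hyz).1 (hyy'.trans (firstGE_mem hz hyz).2)

theorem monotoneOn_gapMidpoint (ha : a ∈ S) (hb : b ∈ S) :
    MonotoneOn S.gapMidpoint (Set.Icc a b) := by
  intro y hy y' hy' hyy'
  have := lastLE_le_lastLE ha hy.1 hyy'
  have := firstGE_le_firstGE hb hy'.2 hyy'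
  unfold gapMidpoint
  linarith

theorem mapsTo_gapMidpoint (ha : a ∈ S) (hb : b ∈ S) :
    MapsTo S.gapMidpoint (Set.Icc a b) (Set.Icc a b) := by
  intro y hy
  have := le_lastLE ha hy.1
  have := firstGE_le hb hy.2
  have := (lastLE_mem ha hy.1).2
  have := (firstGE_mem hb hy.2).2
  constructor <;> unfold gapMidpoint <;> linarith

theorem gapMidpoint_of_mem (hy : y ∈ S) : S.gapMidpoint y = y := by
  have := le_lastLE hy le_rfl
  have := firstGE_le hy le_rfl
  have := (lastLE_mem hy le_rfl).2
  have := (firstGE_mem hy le_rfl).2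
  unfold gapMidpoint
  linarith

theorem disjoint_uIcc_gapMidpoint (ha : a ∈ S) (hb : b ∈ S) (hy : y ∈ Set.Icc a b)
    (hyS : y ∉ S) : Disjoint (S : Set ℝ) (Set.uIcc y (S.gapMidpoint y)) := by
  obtain ⟨hlo, hlo_le⟩ := lastLE_mem ha hy.1
  obtain ⟨hhi, hhi_ge⟩ := firstGE_mem hb hy.2
  have hlo_lt : S.lastLE y < y := hlo_le.lt_of_ne fun h => hyS (h ▸ hlo)
  have hhi_gt : y < S.firstGE y := hhi_ge.lt_of_ne' fun h => hyS (h ▸ hhi)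
  rw [Set.disjoint_left]
  rintro z hz ⟨hz₁, hz₂⟩
  rcases le_total z y with hzy | hyz
  · have := le_lastLE hz hzy
    simp only [gapMidpoint, inf_le_iff] at hz₁
    rcases hz₁ with h | h <;> linarith
  · have := firstGE_le hz hyz
    simp only [gapMidpoint, le_sup_iff] at hz₂
    rcases hz₂ with h | h <;> linarith

theorem gapMidpoint_eq_of_disjoint (ha : a ∈ S) (hb : b ∈ S) (hy : y ∈ Set.Icc a b)
    (hy' : y' ∈ Set.Icc a b) (hyy' : y ≤ y')
    (hdisj : Disjoint (S : Set ℝ) (Set.Icc y y')) : S.gapMidpoint y = S.gapMidpoint y' := by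
  obtain ⟨hlo, hlo_le⟩ := lastLE_mem ha hy'.1
  obtain ⟨hhi, hhi_ge⟩ := firstGE_mem hb hy.2
  have hlo_lt : S.lastLE y' < y := not_le.1 fun h => hdisj.notMem_of_mem_left hlo ⟨h, hlo_le⟩
  have hhi_gt : y' < S.firstGE y := not_le.1 fun h => hdisj.notMem_of_mem_left hhi ⟨hhi_ge, h⟩
  have := le_lastLE hlo hlo_lt.le
  have := firstGE_le hhi hhi_gt.le
  have := lastLE_le_lastLE ha hy.1 hyy'
  have := firstGE_le_firstGE hb hy'.2 hyy'
  unfold gapMidpoint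
  linarith

end Finset

theorem isStepFunctionOn_of_finset {H : ℝ} {g : ℝ → ℝ} (hH : 0 < H) (S : Finset ℝ)
    (h0 : 0 ∈ S) (hHS : H ∈ S) (hS : (S : Set ℝ) ⊆ Icc 0 H)
    (hg : ∀ y ∈ Icc 0 H, ∀ y' ∈ Icc 0 H, y ≤ y' → Disjoint (S : Set ℝ) (Icc y y') →
      g y = g y') :
    IsStepFunctionOn H g := by
  set e := S.orderEmbOfFin rfl
  have hcard : 1 < S.card := Finset.one_lt_card.2 ⟨0, h0, H, hHS, hH.ne⟩
  set p : ℕ → ℝ := fun i => if h : i < S.card then e ⟨i, h⟩ else H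
  have hp : ∀ i (h : i < S.card), p i = e ⟨i, h⟩ := fun i h => dif_pos h
  have hp0 : p 0 = 0 := by
    rw [hp 0 (by omega), Finset.orderEmbOfFin_zero rfl (by omega)]
    exact le_antisymm (S.min'_le 0 h0) (hS (S.min'_mem _)).1
  have hpk : p (S.card - 1) = H := by
    rw [hp _ (by omega), Finset.orderEmbOfFin_last rfl (by omega)]
    exact le_antisymm (hS (S.max'_mem _)).2 (S.le_max' H hHS)
  have hp_lt : ∀ i < S.card - 1, p i < p (i + 1) := fun i hi => by
    rw [hp i (by omega), hp (i + 1) (by omega)]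
    exact e.strictMono (Fin.mk_lt_mk.2 (Nat.lt_succ_self i))
  refine ⟨S.card - 1, p, fun i => g ((p i + p (i + 1)) / 2), by omega, hp0, hpk, hp_lt, ?_⟩
  intro i hi y hy
  have hgap : ∀ z ∈ S, z ∉ Ioo (p i) (p (i + 1)) := by
    intro z hz ⟨hz₁, hz₂⟩
    obtain ⟨j, rfl⟩ : z ∈ Set.range e := by rw [Finset.range_orderEmbOfFin]; exact hz
    rw [hp i (by omega)] at hz₁
    rw [hp (i + 1) (by omega)] at hz₂
    rcases le_or_gt (j : ℕ) i with hj | hj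
    · exact (e.monotone (Fin.mk_le_mk.2 hj)).not_gt hz₁
    · exact (e.monotone (Fin.mk_le_mk.2 hj)).not_gt hz₂
  have hIoo : Ioo (p i) (p (i + 1)) ⊆ Icc 0 H := by
    have hpS : ∀ j (h : j < S.card), p j ∈ Icc 0 H := fun j h => by
      rw [hp j h]; exact hS (S.orderEmbOfFin_mem rfl _)
    exact Ioo_subset_Icc_self.trans
      (Icc_subset_Icc (hpS i (by omega)).1 (hpS (i + 1) (by omega)).2)
  have hconst :
      ∀ u ∈ Ioo (p i) (p (i + 1)), ∀ w ∈ Ioo (p i) (p (i + 1)), u ≤ w → g u = g w :=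
    fun u hu w hw huw => hg u (hIoo hu) w (hIoo hw) huw <| Set.disjoint_left.2 fun z hz hzuw =>
      hgap z hz ⟨hu.1.trans_le hzuw.1, hzuw.2.trans_lt hw.2⟩
  have hmid : (p i + p (i + 1)) / 2 ∈ Ioo (p i) (p (i + 1)) := by
    have := hp_lt i hi; constructor <;> linarith
  rcases le_total y ((p i + p (i + 1)) / 2) with h | h
  · exact hconst y hy _ hmid h
  · exact (hconst _ hmid y hy h).symm

theorem BoundedVariationOn.exists_monotoneOn_isStepFunctionOn_comp {f : ℝ → ℝ} {H ε : ℝ}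
    (hH : 0 < H) (hf : BoundedVariationOn f (Icc 0 H)) (hε : 0 < ε) :
    ∃ φ : ℝ → ℝ, MonotoneOn φ (Icc 0 H) ∧ MapsTo φ (Icc 0 H) (Icc 0 H) ∧
      (∀ y ∈ Icc 0 H, dist (f y) (f (φ y)) ≤ ε) ∧ IsStepFunctionOn H (f ∘ φ) := by
  obtain ⟨S, hS, hosc⟩ := hf.exists_finset_dist_le_of_disjoint_Icc hε
  set T := insert 0 (insert H S)
  have hST : (S : Set ℝ) ⊆ T :=
    Finset.coe_subset.2 ((Finset.subset_insert H S).trans (Finset.subset_insert 0 _))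
  have h0 : (0 : ℝ) ∈ T := Finset.mem_insert_self _ _
  have hHT : H ∈ T := Finset.mem_insert_of_mem (Finset.mem_insert_self _ _)
  have hT : (T : Set ℝ) ⊆ Icc 0 H := by
    simp only [T, Finset.coe_insert, insert_subset_iff]
    exact ⟨⟨le_rfl, hH.le⟩, ⟨hH.le, le_rfl⟩, hS⟩
  refine ⟨T.gapMidpoint, Finset.monotoneOn_gapMidpoint h0 hHT,
    Finset.mapsTo_gapMidpoint h0 hHT, fun y hy => ?_, ?_⟩
  · by_cases hyT : y ∈ T
    · rw [Finset.gapMidpoint_of_mem hyT, dist_self]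
      exact hε.le
    have hφy := Finset.mapsTo_gapMidpoint h0 hHT hy
    have hdisj := (Finset.disjoint_uIcc_gapMidpoint h0 hHT hy hyT).mono_left hST
    rcases le_total y (T.gapMidpoint y) with h | h
    · rw [uIcc_of_le h] at hdisj
      exact hosc _ hy _ hφy h hdisj
    · rw [uIcc_of_ge h] at hdisj
      rw [dist_comm]
      exact hosc _ hφy _ hy h hdisj
  · exact isStepFunctionOn_of_finset hH T h0 hHT hT fun y hy y' hy' hyy' hdisj =>
      congrArg f (Finset.gapMidpoint_eq_of_disjoint h0 hHT hy hy' hyy' hdisj)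

theorem stmt15
    (H : ℝ) (hH : 0 < H) (c : ℝ → ℝ) (m M : ℝ)
    (hbounds : ∀ y ∈ Set.Icc (0:ℝ) H, m ≤ c y ∧ c y ≤ M)
    (hBV : eVariationOn c (Set.Icc (0:ℝ) H) ≠ ⊤) :
    ∃ cn : ℕ → ℝ → ℝ,
      (∀ n : ℕ, IsStepFunctionOn H (cn n)) ∧
      TendstoUniformlyOn cn c Filter.atTop (Set.Icc (0:ℝ) H) ∧
      (∀ n : ℕ, eVariationOn (cn n) (Set.Icc (0:ℝ) H) ≤ eVariationOn c (Set.Icc (0:ℝ) H)) ∧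
      (∀ n : ℕ, ∀ y ∈ Set.Icc (0:ℝ) H,
        sInf (c '' Set.Icc (0:ℝ) H) ≤ cn n y ∧ cn n y ≤ sSup (c '' Set.Icc (0:ℝ) H)) := by
  choose φ hmono hmaps hdist hstep using fun n : ℕ =>
    BoundedVariationOn.exists_monotoneOn_isStepFunctionOn_comp hH hBV
      (Nat.one_div_pos_of_nat (n := n))
  refine ⟨fun n => c ∘ φ n, hstep,
    tendstoUniformlyOn_of_dist_le tendsto_one_div_add_atTop_nhds_zero_nat hdist,
    fun n => eVariationOn.comp_le_of_monotoneOn c (φ n) (hmono n) (hmaps n), fun n y hy => ?_⟩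
  have hmem : c (φ n y) ∈ c '' Icc 0 H := mem_image_of_mem c (hmaps n hy)
  exact ⟨csInf_le ⟨m, forall_mem_image.2 fun z hz => (hbounds z hz).1⟩ hmem,
    le_csSup ⟨M, forall_mem_image.2 fun z hz => (hbounds z hz).2⟩ hmem⟩
end

section
/- Let H > 0, let c ∈ C²([0,H]) with 0 < c_m ≤ c(y) ≤ c_M for all y, let 0 < ε < Λ, and let (a,b) ⊆ (0,H). Then there exist μ₀ > 0 and d > 0 such that for every μ ≥ μ₀, every λ with (c_M + ε) μ² ≤ λ ≤ (c_M + Λ) μ², and every normalized reduced eigenfunction u for (c, μ, λ), one has ∫_a^b u(y)² c(y)⁻¹ dy ≥ d. -/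
open Set MeasureTheory Filter

/-!
Write `q = λ / c - μ²`, so that the equation reads `u'' + q u = 0` with
`(ε / c_M) μ² ≤ q ≤ β μ²` and `|q'| ≤ K q`, where `β` and `K` do not depend on `μ`.
The energy `F = u² + u'² / q` then satisfies `|F'| ≤ K F`, so by a Grönwall argument `F` varies
by at most the factor `e^{KH}` on `[0, H]`. Integrating by parts, `∫ u'² = ∫ q u²` plus boundary
terms, so `∫ u'² / q ≲ (β c_M / ε) ∫ u²`; with the normalization this pins `∫₀ᴴ F` between two
constants, hence `F` itself between two constants. On `(a, b)` the same integration by parts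
bounds `∫ₐᵇ F` by a multiple of `∫ₐᵇ u²` plus a boundary term `|u u'| / (ε μ² / c_M) = O(1 / μ)`,
while `∫ₐᵇ F ≥ (b - a) min F`. For `μ` large this forces a lower bound on `∫ₐᵇ u²`.
-/

lemma monotoneOn_exp_mul_of_neg_mul_le_deriv {F F' : ℝ → ℝ} {A B K : ℝ}
    (hF : ∀ y ∈ Icc A B, HasDerivWithinAt F (F' y) (Icc A B) y)
    (hF' : ∀ y ∈ Ioo A B, -(K * F y) ≤ F' y) :
    MonotoneOn (fun y => Real.exp (K * y) * F y) (Icc A B) := by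
  refine monotoneOn_of_hasDerivWithinAt_nonneg (convex_Icc A B)
    (f' := fun y => Real.exp (K * y) * K * F y + Real.exp (K * y) * F' y)
    (((continuous_const.mul continuous_id).rexp.continuousOn).mul
      fun y hy => (hF y hy).continuousWithinAt) (fun y hy => ?_) (fun y hy => ?_)
  · rw [interior_Icc] at hy
    have hexp : HasDerivAt (fun y => Real.exp (K * y)) (Real.exp (K * y) * K) y := by
      simpa using ((hasDerivAt_id y).const_mul K).exp
    exact (hexp.mul ((hF y (Ioo_subset_Icc_self hy)).hasDerivAt
      (Icc_mem_nhds hy.1 hy.2))).hasDerivWithinAt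
  · rw [interior_Icc] at hy
    have := mul_le_mul_of_nonneg_left (hF' y hy) (Real.exp_pos (K * y)).le
    linarith

lemma le_exp_mul_mul_of_abs_deriv_le {F F' : ℝ → ℝ} {A B K : ℝ} (hK : 0 ≤ K)
    (hF : ∀ y ∈ Icc A B, HasDerivWithinAt F (F' y) (Icc A B) y)
    (hF0 : ∀ y ∈ Icc A B, 0 ≤ F y) (hF' : ∀ y ∈ Ioo A B, |F' y| ≤ K * F y)
    {x y : ℝ} (hx : x ∈ Icc A B) (hy : y ∈ Icc A B) :
    F x ≤ Real.exp (K * (B - A)) * F y := by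
  have of_exp_mul_le : ∀ s t, s - t ≤ K * (B - A) →
      Real.exp t * F x ≤ Real.exp s * F y → F x ≤ Real.exp (K * (B - A)) * F y :=
    fun s t hst h =>
    calc F x = Real.exp (-t) * (Real.exp t * F x) := by rw [← mul_assoc, ← Real.exp_add]; simp
      _ ≤ Real.exp (-t) * (Real.exp s * F y) := by gcongr
      _ = Real.exp (s - t) * F y := by rw [← mul_assoc, ← Real.exp_add]; ring_nf
      _ ≤ Real.exp (K * (B - A)) * F y := by gcongr; exact hF0 y hy
  rcases le_total x y with hxy | hyx
  · refine of_exp_mul_le (K * y) (K * x) (by nlinarith [hx.1, hy.2]) ?_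
    exact monotoneOn_exp_mul_of_neg_mul_le_deriv hF
      (fun z hz => by linarith [neg_abs_le (F' z), hF' z hz]) hx hy hxy
  · refine of_exp_mul_le (-K * y) (-K * x) (by nlinarith [hy.1, hx.2]) ?_
    -- `e^{-K y} F y` is antitone: apply the monotone case to `-F` with rate `-K`
    have := monotoneOn_exp_mul_of_neg_mul_le_deriv (K := -K) (fun z hz => (hF z hz).neg)
      (fun z hz => by simp only [Pi.neg_apply]; linarith [le_abs_self (F' z), hF' z hz]) hy hx hyx
    simp only [Pi.neg_apply, mul_neg] at this
    linarith

lemma integral_le_mul_of_le {F : ℝ → ℝ} {A B M : ℝ} (hAB : A ≤ B)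
    (hF : ContinuousOn F (Icc A B)) (h : ∀ x ∈ Icc A B, F x ≤ M) :
    ∫ x in A..B, F x ≤ (B - A) * M := by
  simpa using intervalIntegral.integral_mono_on hAB
    (hF.intervalIntegrable_of_Icc (μ := volume) hAB) intervalIntegrable_const h

lemma mul_le_integral_of_le {F : ℝ → ℝ} {A B M : ℝ} (hAB : A ≤ B)
    (hF : ContinuousOn F (Icc A B)) (h : ∀ x ∈ Icc A B, M ≤ F x) :
    (B - A) * M ≤ ∫ x in A..B, F x := by
  simpa using intervalIntegral.integral_mono_on hAB intervalIntegrable_const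
    (hF.intervalIntegrable_of_Icc (μ := volume) hAB) h

lemma div_le_of_le_integral_of_forall_le_mul {F : ℝ → ℝ} {A B E m y : ℝ} (hAB : A < B)
    (hF : ContinuousOn F (Icc A B)) (hE : 0 < E) (h : ∀ x ∈ Icc A B, F x ≤ E * F y)
    (hm : m ≤ ∫ x in A..B, F x) : m / ((B - A) * E) ≤ F y := by
  have := integral_le_mul_of_le hAB.le hF h
  rw [div_le_iff₀ (mul_pos (sub_pos.2 hAB) hE)]
  linarith

lemma le_div_of_integral_le_of_forall_le_mul {F : ℝ → ℝ} {A B E M y : ℝ} (hAB : A < B)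
    (hF : ContinuousOn F (Icc A B)) (hE : 0 < E) (h : ∀ x ∈ Icc A B, F y ≤ E * F x)
    (hM : ∫ x in A..B, F x ≤ M) : F y ≤ E * M / (B - A) := by
  have := mul_le_integral_of_le hAB.le hF fun x hx => (div_le_iff₀' hE).2 (h x hx)
  rw [mul_div_assoc', div_le_iff₀ hE] at this
  rw [le_div_iff₀ (sub_pos.2 hAB)]
  nlinarith [mul_le_mul_of_nonneg_left hM hE.le]

section WeightedIntegral

variable {f c : ℝ → ℝ} {s t : ℝ}

lemma mul_integral_div_le_integral {m : ℝ} (hst : s ≤ t) (hf : ContinuousOn f (Icc s t))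
    (hc : ContinuousOn c (Icc s t)) (hf0 : ∀ y ∈ Icc s t, 0 ≤ f y) (hm : 0 < m)
    (hmc : ∀ y ∈ Icc s t, m ≤ c y) : m * ∫ y in s..t, f y / c y ≤ ∫ y in s..t, f y := by
  have hc0 : ∀ y ∈ Icc s t, 0 < c y := fun y hy => hm.trans_le (hmc y hy)
  rw [← intervalIntegral.integral_const_mul]
  refine intervalIntegral.integral_mono_on hst
    (((hf.div hc fun y hy => (hc0 y hy).ne').const_smul m).intervalIntegrable_of_Icc hst)
    (hf.intervalIntegrable_of_Icc hst) fun y hy => ?_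
  rw [mul_div_assoc', div_le_iff₀ (hc0 y hy), mul_comm]
  exact mul_le_mul_of_nonneg_left (hmc y hy) (hf0 y hy)

lemma integral_le_mul_integral_div {M : ℝ} (hst : s ≤ t) (hf : ContinuousOn f (Icc s t))
    (hc : ContinuousOn c (Icc s t)) (hf0 : ∀ y ∈ Icc s t, 0 ≤ f y)
    (hc0 : ∀ y ∈ Icc s t, 0 < c y) (hcM : ∀ y ∈ Icc s t, c y ≤ M) :
    ∫ y in s..t, f y ≤ M * ∫ y in s..t, f y / c y := by
  rw [← intervalIntegral.integral_const_mul]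
  refine intervalIntegral.integral_mono_on hst (hf.intervalIntegrable_of_Icc hst)
    (((hf.div hc fun y hy => (hc0 y hy).ne').const_smul M).intervalIntegrable_of_Icc hst)
    fun y hy => ?_
  rw [mul_div_assoc', le_div_iff₀ (hc0 y hy), mul_comm M]
  exact mul_le_mul_of_nonneg_left (hcM y hy) (hf0 y hy)

end WeightedIntegral

noncomputable def schrodingerEnergy (q u u' : ℝ → ℝ) (y : ℝ) : ℝ := u y ^ 2 + u' y ^ 2 / q y

lemma continuousOn_schrodingerEnergy {q u u' : ℝ → ℝ} {s : Set ℝ} (hu : ContinuousOn u s)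
    (hu' : ContinuousOn u' s) (hq : ContinuousOn q s) (hq0 : ∀ y ∈ s, q y ≠ 0) :
    ContinuousOn (schrodingerEnergy q u u') s :=
  (hu.pow 2).add ((hu'.pow 2).div hq hq0)

lemma hasDerivWithinAt_schrodingerEnergy {q u u' : ℝ → ℝ} {q' u'' : ℝ} {s : Set ℝ} {y : ℝ}
    (hu : HasDerivWithinAt u (u' y) s y) (hu' : HasDerivWithinAt u' u'' s y)
    (hq : HasDerivWithinAt q q' s y) (hq0 : q y ≠ 0) (heq : u'' = -(q y * u y)) :
    HasDerivWithinAt (schrodingerEnergy q u u') (-(u' y ^ 2 * q' / q y ^ 2)) s y := by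
  refine ((hu.pow 2).add ((hu'.pow 2).div hq hq0)).congr_deriv ?_
  rw [heq, Pi.pow_apply]
  field_simp
  ring

lemma abs_deriv_schrodingerEnergy_le {x v q q' K : ℝ} (hq : 0 < q) (hK : 0 ≤ K)
    (hq' : |q'| ≤ K * q) : |-(v ^ 2 * q' / q ^ 2)| ≤ K * (x ^ 2 + v ^ 2 / q) :=
  calc |-(v ^ 2 * q' / q ^ 2)| = v ^ 2 * |q'| / q ^ 2 := by
        rw [abs_neg, abs_div, abs_mul, abs_sq, abs_sq]
    _ ≤ v ^ 2 * (K * q) / q ^ 2 := by gcongr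
    _ = K * (v ^ 2 / q) := by field_simp
    _ ≤ K * (x ^ 2 + v ^ 2 / q) := by gcongr; exact le_add_of_nonneg_left (sq_nonneg x)

lemma abs_mul_le_sqrt_mul_schrodingerEnergy {x v q β : ℝ} (hq : 0 < q) (hqβ : q ≤ β) :
    |x * v| ≤ √β * (x ^ 2 + v ^ 2 / q) := by
  set F := x ^ 2 + v ^ 2 / q
  have hx : x ^ 2 ≤ F := le_add_of_nonneg_right (by positivity)
  have hv : v ^ 2 ≤ β * F :=
    calc v ^ 2 = q * (v ^ 2 / q) := by field_simp
      _ ≤ β * F := by gcongr; exacts [hq.le.trans hqβ, le_add_of_nonneg_left (sq_nonneg x)]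
  refine abs_le_of_sq_le_sq ?_ (by positivity)
  calc (x * v) ^ 2 = x ^ 2 * v ^ 2 := mul_pow x v 2
    _ ≤ F * (β * F) := by gcongr
    _ = (√β * F) ^ 2 := by rw [mul_pow, Real.sq_sqrt (hq.le.trans hqβ)]; ring

section SecondOrder

variable {q q' u u' u'' : ℝ → ℝ} {s t : ℝ}

lemma integral_sq_deriv_eq (hst : s ≤ t)
    (hu : ∀ y ∈ Icc s t, HasDerivWithinAt u (u' y) (Icc s t) y)
    (hu' : ∀ y ∈ Icc s t, HasDerivWithinAt u' (u'' y) (Icc s t) y)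
    (hq : ContinuousOn q (Icc s t)) (heq : ∀ y ∈ Icc s t, u'' y = -(q y * u y)) :
    ∫ y in s..t, u' y ^ 2 = (∫ y in s..t, q y * u y ^ 2) + (u t * u' t - u s * u' s) := by
  have hucont : ContinuousOn u (Icc s t) := fun y hy => (hu y hy).continuousWithinAt
  have hu'cont : ContinuousOn u' (Icc s t) := fun y hy => (hu' y hy).continuousWithinAt
  have hu'2 : IntervalIntegrable (fun y => u' y ^ 2) volume s t :=
    (hu'cont.pow 2).intervalIntegrable_of_Icc hst
  have hqu2 : IntervalIntegrable (fun y => q y * u y ^ 2) volume s t :=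
    (hq.mul (hucont.pow 2)).intervalIntegrable_of_Icc hst
  have hibp : ∫ y in s..t, (u' y ^ 2 - q y * u y ^ 2) = u t * u' t - u s * u' s := by
    refine intervalIntegral.integral_eq_sub_of_hasDeriv_right_of_le hst (hucont.mul hu'cont)
      (fun y hy => ?_) (hu'2.sub hqu2)
    have hnhds := Icc_mem_nhds hy.1 hy.2
    have hy' := Ioo_subset_Icc_self hy
    convert ((hu y hy').hasDerivAt hnhds).mul ((hu' y hy').hasDerivAt hnhds)
      |>.hasDerivWithinAt using 1
    rw [heq y hy']
    ring
  rw [intervalIntegral.integral_sub hu'2 hqu2] at hibp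
  linarith

lemma integral_schrodingerEnergy_le {α β : ℝ} (hst : s ≤ t)
    (hu : ∀ y ∈ Icc s t, HasDerivWithinAt u (u' y) (Icc s t) y)
    (hu' : ∀ y ∈ Icc s t, HasDerivWithinAt u' (u'' y) (Icc s t) y)
    (hq : ContinuousOn q (Icc s t)) (heq : ∀ y ∈ Icc s t, u'' y = -(q y * u y))
    (hα : 0 < α) (hqα : ∀ y ∈ Icc s t, α ≤ q y) (hqβ : ∀ y ∈ Icc s t, q y ≤ β) :
    ∫ y in s..t, schrodingerEnergy q u u' y ≤
      (1 + β / α) * (∫ y in s..t, u y ^ 2) + (u t * u' t - u s * u' s) / α := by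
  have hucont : ContinuousOn u (Icc s t) := fun y hy => (hu y hy).continuousWithinAt
  have hu'cont : ContinuousOn u' (Icc s t) := fun y hy => (hu' y hy).continuousWithinAt
  have hq0 : ∀ y ∈ Icc s t, 0 < q y := fun y hy => hα.trans_le (hqα y hy)
  have hu2 : IntervalIntegrable (fun y => u y ^ 2) volume s t :=
    (hucont.pow 2).intervalIntegrable_of_Icc hst
  have hu'q : IntervalIntegrable (fun y => u' y ^ 2 / q y) volume s t :=
    ((hu'cont.pow 2).div hq fun y hy => (hq0 y hy).ne').intervalIntegrable_of_Icc hst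
  have hkin : ∫ y in s..t, u' y ^ 2 / q y ≤ (∫ y in s..t, u' y ^ 2) / α := by
    rw [← intervalIntegral.integral_div]
    refine intervalIntegral.integral_mono_on hst hu'q
      (((hu'cont.pow 2).div_const α).intervalIntegrable_of_Icc hst) fun y hy => ?_
    gcongr
    exact hqα y hy
  have hpot : ∫ y in s..t, q y * u y ^ 2 ≤ β * ∫ y in s..t, u y ^ 2 := by
    rw [← intervalIntegral.integral_const_mul]
    refine intervalIntegral.integral_mono_on hst
      ((hq.mul (hucont.pow 2)).intervalIntegrable_of_Icc hst) (hu2.const_mul β) fun y hy => ?_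
    gcongr
    exact hqβ y hy
  rw [integral_sq_deriv_eq hst hu hu' hq heq, add_div] at hkin
  have hpot' : (∫ y in s..t, q y * u y ^ 2) / α ≤ β / α * ∫ y in s..t, u y ^ 2 := by
    rw [div_mul_eq_mul_div]; gcongr
  unfold schrodingerEnergy
  rw [intervalIntegral.integral_add hu2 hu'q]
  linarith

lemma schrodingerEnergy_le_exp_mul {K x y : ℝ} (hK : 0 ≤ K)
    (hq : ∀ y ∈ Icc s t, HasDerivWithinAt q (q' y) (Icc s t) y) (hq0 : ∀ y ∈ Icc s t, 0 < q y)
    (hq' : ∀ y ∈ Icc s t, |q' y| ≤ K * q y)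
    (hu : ∀ y ∈ Icc s t, HasDerivWithinAt u (u' y) (Icc s t) y)
    (hu' : ∀ y ∈ Icc s t, HasDerivWithinAt u' (u'' y) (Icc s t) y)
    (heq : ∀ y ∈ Icc s t, u'' y = -(q y * u y)) (hx : x ∈ Icc s t) (hy : y ∈ Icc s t) :
    schrodingerEnergy q u u' x ≤ Real.exp (K * (t - s)) * schrodingerEnergy q u u' y :=
  le_exp_mul_mul_of_abs_deriv_le hK
    (fun z hz => hasDerivWithinAt_schrodingerEnergy (hu z hz) (hu' z hz) (hq z hz)
      (hq0 z hz).ne' (heq z hz))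
    (fun z hz => add_nonneg (sq_nonneg _) (div_nonneg (sq_nonneg _) (hq0 z hz).le))
    (fun z hz => abs_deriv_schrodingerEnergy_le (hq0 z (Ioo_subset_Icc_self hz)) hK
      (hq' z (Ioo_subset_Icc_self hz))) hx hy

end SecondOrder

lemma schrodingerEnergy_mem_Icc_of_dirichlet {H α β K m₀ M₀ y : ℝ} {q q' u u' u'' : ℝ → ℝ}
    (hH : 0 < H) (hα : 0 < α) (hK : 0 ≤ K)
    (hq : ∀ y ∈ Icc 0 H, HasDerivWithinAt q (q' y) (Icc 0 H) y)
    (hqα : ∀ y ∈ Icc 0 H, α ≤ q y) (hqβ : ∀ y ∈ Icc 0 H, q y ≤ β)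
    (hq' : ∀ y ∈ Icc 0 H, |q' y| ≤ K * q y)
    (hu : ∀ y ∈ Icc 0 H, HasDerivWithinAt u (u' y) (Icc 0 H) y)
    (hu' : ∀ y ∈ Icc 0 H, HasDerivWithinAt u' (u'' y) (Icc 0 H) y)
    (heq : ∀ y ∈ Icc 0 H, u'' y = -(q y * u y)) (hu0 : u 0 = 0) (huH : u H = 0)
    (hm₀ : m₀ ≤ ∫ y in 0..H, u y ^ 2) (hM₀ : ∫ y in 0..H, u y ^ 2 ≤ M₀) (hy : y ∈ Icc 0 H) :
    schrodingerEnergy q u u' y ∈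
      Icc (m₀ / (H * Real.exp (K * H))) (Real.exp (K * H) * ((1 + β / α) * M₀) / H) := by
  set F := schrodingerEnergy q u u'
  have hq0 : ∀ y ∈ Icc 0 H, 0 < q y := fun y hy => hα.trans_le (hqα y hy)
  have hβ : 0 < β := hα.trans_le ((hqα 0 ⟨le_rfl, hH.le⟩).trans (hqβ 0 ⟨le_rfl, hH.le⟩))
  have hucont : ContinuousOn u (Icc 0 H) := fun y hy => (hu y hy).continuousWithinAt
  have hqcont : ContinuousOn q (Icc 0 H) := fun y hy => (hq y hy).continuousWithinAt
  have hFcont : ContinuousOn F (Icc 0 H) := continuousOn_schrodingerEnergy hucont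
    (fun y hy => (hu' y hy).continuousWithinAt) hqcont fun y hy => (hq0 y hy).ne'
  have harnack : ∀ x ∈ Icc 0 H, ∀ y ∈ Icc 0 H, F x ≤ Real.exp (K * H) * F y :=
    fun x hx y hy => by simpa using schrodingerEnergy_le_exp_mul hK hq hq0 hq' hu hu' heq hx hy
  have hlow : m₀ ≤ ∫ y in 0..H, F y := hm₀.trans <| intervalIntegral.integral_mono_on hH.le
    ((hucont.pow 2).intervalIntegrable_of_Icc hH.le) (hFcont.intervalIntegrable_of_Icc hH.le)
    fun y hy => le_add_of_nonneg_right (div_nonneg (sq_nonneg _) (hq0 y hy).le)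
  have hup : ∫ y in 0..H, F y ≤ (1 + β / α) * M₀ := by
    have := integral_schrodingerEnergy_le hH.le hu hu' hqcont heq hα hqα hqβ
    simp only [hu0, huH, zero_mul, sub_zero, zero_div, add_zero] at this
    exact this.trans (by gcongr)
  constructor
  · simpa using div_le_of_le_integral_of_forall_le_mul hH hFcont (Real.exp_pos _)
      (fun x hx => harnack x hx y hy) hlow
  · simpa using le_div_of_integral_le_of_forall_le_mul hH hFcont (Real.exp_pos _)
      (fun x hx => harnack y hy x hx) hup

lemma schrodinger_nonconcentration_estimate
    {H a b α β K μ m₀ M₀ : ℝ} {q q' u u' u'' : ℝ → ℝ}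
    (ha : 0 ≤ a) (hab : a < b) (hb : b ≤ H) (hα : 0 < α) (hK : 0 ≤ K) (hμ : 0 < μ)
    (hq : ∀ y ∈ Icc 0 H, HasDerivWithinAt q (q' y) (Icc 0 H) y)
    (hqα : ∀ y ∈ Icc 0 H, α * μ ^ 2 ≤ q y) (hqβ : ∀ y ∈ Icc 0 H, q y ≤ β * μ ^ 2)
    (hq' : ∀ y ∈ Icc 0 H, |q' y| ≤ K * q y)
    (hu : ∀ y ∈ Icc 0 H, HasDerivWithinAt u (u' y) (Icc 0 H) y)
    (hu' : ∀ y ∈ Icc 0 H, HasDerivWithinAt u' (u'' y) (Icc 0 H) y)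
    (heq : ∀ y ∈ Icc 0 H, u'' y = -(q y * u y)) (hu0 : u 0 = 0) (huH : u H = 0)
    (hm₀ : m₀ ≤ ∫ y in 0..H, u y ^ 2) (hM₀ : ∫ y in 0..H, u y ^ 2 ≤ M₀) :
    (b - a) * (m₀ / (H * Real.exp (K * H))) ≤ (1 + β / α) * (∫ y in a..b, u y ^ 2) +
      2 * √β * (Real.exp (K * H) * ((1 + β / α) * M₀) / H) / α / μ := by
  have hH : 0 < H := by linarith
  have habH : Icc a b ⊆ Icc 0 H := Icc_subset_Icc ha hb
  set M := Real.exp (K * H) * ((1 + β / α) * M₀) / H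
  set F := schrodingerEnergy q u u'
  have hαμ : 0 < α * μ ^ 2 := by positivity
  have hq0 : ∀ y ∈ Icc 0 H, 0 < q y := fun y hy => hαμ.trans_le (hqα y hy)
  have hqcont : ContinuousOn q (Icc 0 H) := fun y hy => (hq y hy).continuousWithinAt
  have hF : ∀ y ∈ Icc 0 H, F y ∈ Icc (m₀ / (H * Real.exp (K * H))) M := fun y hy => by
    simpa only [mul_div_mul_right _ _ (pow_pos hμ 2).ne'] using
      schrodingerEnergy_mem_Icc_of_dirichlet hH hαμ hK hq hqα hqβ hq' hu hu' heq hu0 huH hm₀ hM₀ hy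
  have hmul_le : ∀ y ∈ Icc 0 H, |u y * u' y| ≤ √β * μ * M := fun y hy =>
    calc |u y * u' y| ≤ √(β * μ ^ 2) * F y :=
          abs_mul_le_sqrt_mul_schrodingerEnergy (hq0 y hy) (hqβ y hy)
      _ ≤ √β * μ * M := by
          rw [Real.sqrt_mul' _ (sq_nonneg μ), Real.sqrt_sq hμ.le]
          gcongr
          exact (hF y hy).2
  have hlocal := integral_schrodingerEnergy_le hab.le (fun y hy => (hu y (habH hy)).mono habH)
    (fun y hy => (hu' y (habH hy)).mono habH) (hqcont.mono habH) (fun y hy => heq y (habH hy))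
    hαμ (fun y hy => hqα y (habH hy)) (fun y hy => hqβ y (habH hy))
  rw [mul_div_mul_right _ _ (pow_pos hμ 2).ne'] at hlocal
  have hbdry : (u b * u' b - u a * u' a) / (α * μ ^ 2) ≤ 2 * √β * M / α / μ := by
    have hb' := hmul_le b ⟨ha.trans hab.le, hb⟩
    have ha' := hmul_le a ⟨ha, hab.le.trans hb⟩
    calc _ ≤ (2 * √β * μ * M) / (α * μ ^ 2) := by
          gcongr
          linarith [le_abs_self (u b * u' b), neg_abs_le (u a * u' a)]
      _ = _ := by field_simp
  have hFcont : ContinuousOn F (Icc a b) := (continuousOn_schrodingerEnergy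
    (fun y hy => (hu y hy).continuousWithinAt) (fun y hy => (hu' y hy).continuousWithinAt)
    hqcont fun y hy => (hq0 y hy).ne').mono habH
  have hlow := mul_le_integral_of_le hab.le hFcont fun y hy => (hF y (habH hy)).1
  linarith

lemma exists_forall_le_integral_sq_of_schrodinger {H a b α β K m₀ M₀ : ℝ}
    (ha : 0 ≤ a) (hab : a < b) (hb : b ≤ H) (hα : 0 < α) (hβ : 0 ≤ β) (hK : 0 ≤ K)
    (hm₀ : 0 < m₀) :
    ∃ μ₀, 0 < μ₀ ∧ ∃ d, 0 < d ∧ ∀ μ, μ₀ ≤ μ → ∀ {q q' u u' u'' : ℝ → ℝ},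
      (∀ y ∈ Icc 0 H, HasDerivWithinAt q (q' y) (Icc 0 H) y) →
      (∀ y ∈ Icc 0 H, α * μ ^ 2 ≤ q y) → (∀ y ∈ Icc 0 H, q y ≤ β * μ ^ 2) →
      (∀ y ∈ Icc 0 H, |q' y| ≤ K * q y) →
      (∀ y ∈ Icc 0 H, HasDerivWithinAt u (u' y) (Icc 0 H) y) →
      (∀ y ∈ Icc 0 H, HasDerivWithinAt u' (u'' y) (Icc 0 H) y) →
      (∀ y ∈ Icc 0 H, u'' y = -(q y * u y)) → u 0 = 0 → u H = 0 →
      m₀ ≤ ∫ y in 0..H, u y ^ 2 → ∫ y in 0..H, u y ^ 2 ≤ M₀ →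
      d ≤ ∫ y in a..b, u y ^ 2 := by
  have hH : 0 < H := by linarith
  set S := 1 + β / α
  set P := (b - a) * (m₀ / (H * Real.exp (K * H)))
  set C := 2 * √β * (Real.exp (K * H) * (S * M₀) / H) / α
  have hP : 0 < P := by have := sub_pos.2 hab; positivity
  refine ⟨max 1 (2 * C / P), by positivity, P / (2 * S), by positivity,
    fun μ hμ q q' u u' u'' hq hqα hqβ hq' hu hu' heq hu0 huH hm hM => ?_⟩
  have hμ0 : 0 < μ := zero_lt_one.trans_le (le_of_max_le_left hμ)
  have key : P ≤ S * (∫ y in a..b, u y ^ 2) + C / μ :=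
    schrodinger_nonconcentration_estimate ha hab hb hα hK hμ0 hq hqα hqβ hq' hu hu' heq hu0 huH
      hm hM
  have hC : C / μ ≤ P / 2 := by
    rw [div_le_iff₀ hμ0]
    have := (div_le_iff₀ hP).1 (le_of_max_le_right hμ)
    linarith
  rw [div_le_iff₀ (by positivity)]
  linarith

lemma le_div_sub_sq {cy c_M ε μ lam : ℝ} (hcy : 0 < cy) (hcyM : cy ≤ c_M) (hε : 0 ≤ ε)
    (hlam : (c_M + ε) * μ ^ 2 ≤ lam) : ε / c_M * μ ^ 2 ≤ lam / cy - μ ^ 2 := by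
  have hcM : 0 < c_M := hcy.trans_le hcyM
  have hlam0 : 0 ≤ lam := le_trans (by positivity) hlam
  calc ε / c_M * μ ^ 2 = (c_M + ε) * μ ^ 2 / c_M - μ ^ 2 := by field_simp; ring
    _ ≤ lam / c_M - μ ^ 2 := by gcongr
    _ ≤ lam / cy - μ ^ 2 := by gcongr

lemma div_sub_sq_le {cy c_m L μ lam : ℝ} (hcm : 0 < c_m) (hcy : c_m ≤ cy) (hL : 0 ≤ L)
    (hlam : lam ≤ L * μ ^ 2) : lam / cy - μ ^ 2 ≤ (L / c_m - 1) * μ ^ 2 := by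
  calc lam / cy - μ ^ 2 ≤ L * μ ^ 2 / cy - μ ^ 2 := by gcongr; linarith
    _ ≤ L * μ ^ 2 / c_m - μ ^ 2 := by gcongr
    _ = (L / c_m - 1) * μ ^ 2 := by ring

lemma abs_mul_div_sq_le {cy c'y c_m C' L α μ lam Q : ℝ} (hcm : 0 < c_m) (hcy : c_m ≤ cy)
    (hc' : |c'y| ≤ C') (hL : 0 ≤ L) (hlam0 : 0 ≤ lam) (hlam : lam ≤ L * μ ^ 2) (hα : 0 < α)
    (hQ : α * μ ^ 2 ≤ Q) : |-(lam * c'y / cy ^ 2)| ≤ L * C' / (α * c_m ^ 2) * Q := by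
  have hC' : 0 ≤ C' := (abs_nonneg _).trans hc'
  calc |-(lam * c'y / cy ^ 2)| = lam * |c'y| / cy ^ 2 := by
        rw [abs_neg, abs_div, abs_mul, abs_of_nonneg hlam0, abs_sq]
    _ ≤ L * μ ^ 2 * C' / c_m ^ 2 := by gcongr
    _ = L * C' / (α * c_m ^ 2) * (α * μ ^ 2) := by field_simp
    _ ≤ L * C' / (α * c_m ^ 2) * Q := by gcongr

theorem stmt17_general
    (H c_m c_M ε Λ a b : ℝ) (c c' c'' : ℝ → ℝ)
    (hH : 0 < H) (hcm : 0 < c_m)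
    (hcbounds : ∀ y ∈ Set.Icc (0:ℝ) H, c_m ≤ c y ∧ c y ≤ c_M)
    (hc1 : ∀ y ∈ Set.Icc (0:ℝ) H, HasDerivWithinAt c (c' y) (Set.Icc (0:ℝ) H) y)
    (hc2 : ∀ y ∈ Set.Icc (0:ℝ) H, HasDerivWithinAt c' (c'' y) (Set.Icc (0:ℝ) H) y)
    (hε : 0 < ε) (hεΛ : ε < Λ)
    (ha : 0 ≤ a) (hab : a < b) (hb : b ≤ H) :
    ∃ μ₀ : ℝ, 0 < μ₀ ∧ ∃ d : ℝ, 0 < d ∧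
      ∀ (μ lam : ℝ) (u u' u'' : ℝ → ℝ),
        μ₀ ≤ μ → (c_M + ε) * μ ^ 2 ≤ lam → lam ≤ (c_M + Λ) * μ ^ 2 →
        (∀ y ∈ Set.Icc (0:ℝ) H, HasDerivWithinAt u (u' y) (Set.Icc (0:ℝ) H) y) →
        (∀ y ∈ Set.Icc (0:ℝ) H, HasDerivWithinAt u' (u'' y) (Set.Icc (0:ℝ) H) y) →
        ContinuousOn u'' (Set.Icc (0:ℝ) H) →
        (∀ y ∈ Set.Icc (0:ℝ) H, c y * u'' y + (lam - c y * μ ^ 2) * u y = 0) →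
        u 0 = 0 → u H = 0 → (∃ y ∈ Set.Icc (0:ℝ) H, u y ≠ 0) →
        (∫ y in (0:ℝ)..H, (u y) ^ 2 / c y) = 1 →
        d ≤ ∫ y in a..b, (u y) ^ 2 / c y := by
  have h0 : (0 : ℝ) ∈ Icc 0 H := ⟨le_rfl, hH.le⟩
  have hc0 : ∀ y ∈ Icc 0 H, 0 < c y := fun y hy => hcm.trans_le (hcbounds y hy).1
  have hcmM : c_m ≤ c_M := (hcbounds 0 h0).1.trans (hcbounds 0 h0).2
  have hcM : 0 < c_M := hcm.trans_le hcmM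
  have hccont : ContinuousOn c (Icc 0 H) := fun y hy => (hc1 y hy).continuousWithinAt
  obtain ⟨C', hC'⟩ := isCompact_Icc.exists_bound_of_continuousOn
    fun y hy => (hc2 y hy).continuousWithinAt
  have hL : 0 ≤ c_M + Λ := by linarith
  have hK : 0 ≤ (c_M + Λ) * C' / (ε / c_M * c_m ^ 2) := by
    have := (norm_nonneg _).trans (hC' 0 h0); positivity
  obtain ⟨μ₀, hμ₀, d, hd, hmass⟩ := exists_forall_le_integral_sq_of_schrodinger
    (β := (c_M + Λ) / c_m - 1) (M₀ := c_M) ha hab hb (by positivity : 0 < ε / c_M)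
    (by rw [sub_nonneg, one_le_div hcm]; linarith) hK hcm
  refine ⟨μ₀, hμ₀, d / c_M, by positivity, ?_⟩
  intro μ lam u u' u'' hμ hlam₁ hlam₂ hu hu' _ heq hu0 huH _ hnorm
  have hucont : ContinuousOn u (Icc 0 H) := fun y hy => (hu y hy).continuousWithinAt
  have hqα : ∀ y ∈ Icc 0 H, ε / c_M * μ ^ 2 ≤ lam / c y - μ ^ 2 := fun y hy =>
    le_div_sub_sq (hc0 y hy) (hcbounds y hy).2 hε.le hlam₁
  have hmass_ge : c_m ≤ ∫ y in 0..H, u y ^ 2 := by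
    simpa [hnorm] using mul_integral_div_le_integral hH.le (hucont.pow 2) hccont
      (fun y _ => sq_nonneg (u y)) hcm fun y hy => (hcbounds y hy).1
  have hmass_le : ∫ y in 0..H, u y ^ 2 ≤ c_M := by
    simpa [hnorm] using integral_le_mul_integral_div hH.le (hucont.pow 2) hccont
      (fun y _ => sq_nonneg (u y)) hc0 fun y hy => (hcbounds y hy).2
  have hmass_ab : d ≤ ∫ y in a..b, u y ^ 2 := hmass μ hμ
    (q := fun y => lam / c y - μ ^ 2) (q' := fun y => -(lam * c' y / c y ^ 2))
    (fun y hy => (((hasDerivWithinAt_const y _ lam).div (hc1 y hy)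
      (hc0 y hy).ne').sub_const (μ ^ 2)).congr_deriv (by ring))
    hqα (fun y hy => div_sub_sq_le hcm (hcbounds y hy).1 hL hlam₂)
    (fun y hy => abs_mul_div_sq_le hcm (hcbounds y hy).1 (hC' y hy) hL
      ((by positivity : (0 : ℝ) ≤ (c_M + ε) * μ ^ 2).trans hlam₁) hlam₂ (by positivity)
      (hqα y hy))
    hu hu' (fun y hy => by field_simp [(hc0 y hy).ne']; linarith [heq y hy])
    hu0 huH hmass_ge hmass_le
  have habH : Icc a b ⊆ Icc 0 H := Icc_subset_Icc ha hb
  calc d / c_M ≤ (∫ y in a..b, u y ^ 2) / c_M := by gcongr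
    _ ≤ ∫ y in a..b, u y ^ 2 / c y := by
      rw [div_le_iff₀' hcM]
      exact integral_le_mul_integral_div hab.le ((hucont.pow 2).mono habH) (hccont.mono habH)
        (fun y _ => sq_nonneg (u y)) (fun y hy => hc0 y (habH hy))
        fun y hy => (hcbounds y (habH hy)).2

/-- Non-concentration in the regular case `c ∈ C²([0,H])`, via the Liouville
transformation. -/
theorem stmt17
    (H c_m c_M ε Λ a b : ℝ) (c c' c'' : ℝ → ℝ)
    (hH : 0 < H) (hcm : 0 < c_m) (hcmM : c_m ≤ c_M)
    (hcbounds : ∀ y ∈ Set.Icc (0:ℝ) H, c_m ≤ c y ∧ c y ≤ c_M)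
    (hc1 : ∀ y ∈ Set.Icc (0:ℝ) H, HasDerivWithinAt c (c' y) (Set.Icc (0:ℝ) H) y)
    (hc2 : ∀ y ∈ Set.Icc (0:ℝ) H, HasDerivWithinAt c' (c'' y) (Set.Icc (0:ℝ) H) y)
    (hc''cont : ContinuousOn c'' (Set.Icc (0:ℝ) H))
    (hε : 0 < ε) (hεΛ : ε < Λ)
    (ha : 0 ≤ a) (hab : a < b) (hb : b ≤ H) :
    ∃ μ₀ : ℝ, 0 < μ₀ ∧ ∃ d : ℝ, 0 < d ∧
      ∀ (μ lam : ℝ) (u u' u'' : ℝ → ℝ),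
        μ₀ ≤ μ → (c_M + ε) * μ ^ 2 ≤ lam → lam ≤ (c_M + Λ) * μ ^ 2 →
        (∀ y ∈ Set.Icc (0:ℝ) H, HasDerivWithinAt u (u' y) (Set.Icc (0:ℝ) H) y) →
        (∀ y ∈ Set.Icc (0:ℝ) H, HasDerivWithinAt u' (u'' y) (Set.Icc (0:ℝ) H) y) →
        ContinuousOn u'' (Set.Icc (0:ℝ) H) →
        (∀ y ∈ Set.Icc (0:ℝ) H, c y * u'' y + (lam - c y * μ ^ 2) * u y = 0) →
        u 0 = 0 → u H = 0 → (∃ y ∈ Set.Icc (0:ℝ) H, u y ≠ 0) →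
        (∫ y in (0:ℝ)..H, (u y) ^ 2 / c y) = 1 →
        d ≤ ∫ y in a..b, (u y) ^ 2 / c y :=
  stmt17_general H c_m c_M ε Λ a b c c' c'' hH hcm hcbounds hc1 hc2 hε hεΛ ha hab hb
end

section
/- Let μ > 0, H̄ > 0, M ≥ 0, and let ρ : [0,H̄] → ℝ be continuous with |ρ(ξ)| ≤ M for all ξ ∈ [0,H̄]. Let η ∈ C²([0,H̄]) satisfy η''(ξ) + μ² η(ξ) = ρ(ξ) η(ξ) on [0,H̄] with η(0) = 0, and set α = η'(0)/μ. Then for all ξ ∈ [0,H̄]: |η(ξ) − α sin(μ ξ)| ≤ |α| (e^{M ξ/μ} − 1). In particular, for every δ > 0 and every bound r ≥ |α| there exists μ₀ > 0 (depending only on δ, M, H̄, r) such that μ ≥ μ₀ implies |η(ξ) − α sin(μ ξ)| ≤ δ for all ξ ∈ [0,H̄]. -/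
/-!
With `α = η'(0)/μ`, the deviation `u = η - α sin(μ·)` solves `u'' + μ²u = ρη` with
`u(0) = u'(0) = 0`. In the variation-of-constants coordinate `W = (μu + iu') e^{iμξ}` the free
oscillation is frozen, so `|W'| = |ρη| ≤ M(|u| + |α|) ≤ (M/μ)|W| + M|α|`, using `μ|u| ≤ |W|`.
Gronwall's inequality from `W(0) = 0` gives `μ|u(ξ)| ≤ |W(ξ)| ≤ μ|α|(e^{Mξ/μ} - 1)`. The uniform
statement follows because `e^{MH̄/μ} → 1` as `μ → ∞`.
-/

open Set Filter

section VariationOfConstants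

open Complex

/-- For a free oscillation `f = A sin(μ·) + B cos(μ·)` this is the constant `μ (B + i A)`. -/
noncomputable def variationOfConstants (μ : ℝ) (f f' : ℝ → ℝ) (t : ℝ) : ℂ :=
  (μ * f t + I * f' t) * exp (I * μ * t)

variable {μ : ℝ} {f f' : ℝ → ℝ}

theorem hasDerivWithinAt_variationOfConstants {f'' : ℝ} {s : Set ℝ} {t : ℝ}
    (hf : HasDerivWithinAt f (f' t) s t) (hf' : HasDerivWithinAt f' f'' s t) :
    HasDerivWithinAt (variationOfConstants μ f f')
      (I * ↑(f'' + μ ^ 2 * f t) * exp (I * μ * t)) s t := by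
  have hexp : HasDerivAt (fun x : ℝ => exp (I * μ * x)) (I * μ * exp (I * μ * t)) t := by
    simpa [mul_comm] using ((hasDerivAt_id (t : ℂ)).const_mul (I * μ)).cexp.comp_ofReal
  have := ((hf.ofReal_comp.const_mul (μ : ℂ)).add (hf'.ofReal_comp.const_mul I)).mul
    hexp.hasDerivWithinAt
  refine HasDerivWithinAt.congr_deriv (f := variationOfConstants μ f f') this ?_
  simp only [Pi.add_apply]
  push_cast
  linear_combination (μ : ℂ) * f' t * exp (I * μ * t) * Complex.I_sq

theorem norm_variationOfConstants (t : ℝ) :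
    ‖variationOfConstants μ f f' t‖ = ‖(μ : ℂ) * f t + I * f' t‖ := by
  simp [variationOfConstants, norm_exp]

theorem mul_abs_le_norm_variationOfConstants (hμ : 0 ≤ μ) (t : ℝ) :
    μ * |f t| ≤ ‖variationOfConstants μ f f' t‖ := by
  have hre : ((μ : ℂ) * f t + I * f' t).re = μ * f t := by simp
  calc μ * |f t| = |((μ : ℂ) * f t + I * f' t).re| := by rw [hre, abs_mul, abs_of_nonneg hμ]
    _ ≤ ‖variationOfConstants μ f f' t‖ := by
      rw [norm_variationOfConstants]; exact abs_re_le_norm _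

end VariationOfConstants

theorem gronwallBound_zero_mul (K c x : ℝ) :
    gronwallBound 0 K (K * c) x = c * (Real.exp (K * x) - 1) := by
  rcases eq_or_ne K 0 with rfl | hK
  · simp [gronwallBound_K0]
  · rw [gronwallBound_of_K_ne_0 hK]
    field_simp
    ring

theorem exists_forall_ge_mul_exp_div_sub_one_le {δ : ℝ} (hδ : 0 < δ) (r c : ℝ) :
    ∃ μ₀ : ℝ, 0 < μ₀ ∧ ∀ μ, μ₀ ≤ μ → r * (Real.exp (c / μ) - 1) ≤ δ := by
  have hlim : Tendsto (fun μ : ℝ => r * (Real.exp (c / μ) - 1)) atTop (nhds 0) := by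
    have h := ((Real.continuous_exp.tendsto 0).comp
      ((tendsto_const_nhds (x := c)).div_atTop tendsto_id)).sub_const 1 |>.const_mul r
    simpa using h
  obtain ⟨N, hN⟩ := eventually_atTop.1 ((tendsto_order.1 hlim).2 δ hδ)
  exact ⟨max N 1, by positivity, fun μ hμ => (hN μ (le_of_max_le_left hμ)).le⟩

open Complex in
theorem abs_le_mul_exp_sub_one_of_forced_oscillator {H M μ a : ℝ} {u u' u'' : ℝ → ℝ}
    (hM : 0 ≤ M) (hμ : 0 < μ)
    (hu : ∀ t ∈ Icc 0 H, HasDerivWithinAt u (u' t) (Icc 0 H) t)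
    (hu' : ∀ t ∈ Icc 0 H, HasDerivWithinAt u' (u'' t) (Icc 0 H) t)
    (hforce : ∀ t ∈ Icc 0 H, |u'' t + μ ^ 2 * u t| ≤ M * |u t| + M * a)
    (h0 : u 0 = 0) (h0' : u' 0 = 0) :
    ∀ ξ ∈ Icc 0 H, |u ξ| ≤ a * (Real.exp (M * ξ / μ) - 1) := by
  set W := variationOfConstants μ u u'
  set W' : ℝ → ℂ := fun t => I * ↑(u'' t + μ ^ 2 * u t) * exp (I * μ * t)
  have hW : ∀ t ∈ Icc 0 H, HasDerivWithinAt W (W' t) (Icc 0 H) t := fun t ht =>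
    hasDerivWithinAt_variationOfConstants (hu t ht) (hu' t ht)
  have hW0 : ‖W 0‖ ≤ 0 := by simp [W, variationOfConstants, h0, h0']
  have hW' : ∀ t ∈ Ico 0 H, ‖W' t‖ ≤ M / μ * ‖W t‖ + M / μ * (μ * a) := fun t ht => by
    calc ‖W' t‖ = |u'' t + μ ^ 2 * u t| := by
          simp [W', norm_exp, -ofReal_add, -ofReal_mul, -ofReal_pow]
      _ ≤ M * |u t| + M * a := hforce t (Ico_subset_Icc_self ht)
      _ = M / μ * (μ * |u t|) + M / μ * (μ * a) := by field_simp
      _ ≤ M / μ * ‖W t‖ + M / μ * (μ * a) := by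
        gcongr
        exact mul_abs_le_norm_variationOfConstants hμ.le t
  have hgron := norm_le_gronwallBound_of_norm_deriv_right_le
    (fun t ht => (hW t ht).continuousWithinAt)
    (fun t ht =>
      (hW t (Ico_subset_Icc_self ht)).mono_of_mem_nhdsWithin (Icc_mem_nhdsGE_of_mem ht))
    hW0 hW'
  intro ξ hξ
  have hμu := (mul_abs_le_norm_variationOfConstants hμ.le ξ).trans (hgron ξ hξ)
  rw [sub_zero, gronwallBound_zero_mul, mul_assoc] at hμu
  rw [show M * ξ / μ = M / μ * ξ by ring]
  exact le_of_mul_le_mul_left hμu hμ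

theorem abs_sub_mul_sin_le {H M μ : ℝ} {ρ η η' η'' : ℝ → ℝ}
    (hM : 0 ≤ M) (hρ : ∀ ξ ∈ Icc 0 H, |ρ ξ| ≤ M) (hμ : 0 < μ)
    (hη : ∀ ξ ∈ Icc 0 H, HasDerivWithinAt η (η' ξ) (Icc 0 H) ξ)
    (hη' : ∀ ξ ∈ Icc 0 H, HasDerivWithinAt η' (η'' ξ) (Icc 0 H) ξ)
    (hode : ∀ ξ ∈ Icc 0 H, η'' ξ + μ ^ 2 * η ξ = ρ ξ * η ξ) (h0 : η 0 = 0) :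
    ∀ ξ ∈ Icc 0 H,
      |η ξ - η' 0 / μ * Real.sin (μ * ξ)| ≤ |η' 0 / μ| * (Real.exp (M * ξ / μ) - 1) := by
  set α := η' 0 / μ
  have hsin : ∀ t, HasDerivAt (fun s => α * Real.sin (μ * s)) (α * μ * Real.cos (μ * t)) t :=
    fun t => (((Real.hasDerivAt_sin _).comp t ((hasDerivAt_id t).const_mul μ)).const_mul
      α).congr_deriv (by simp only [id]; ring)
  have hcos : ∀ t, HasDerivAt (fun s => α * μ * Real.cos (μ * s))
      (-(α * μ ^ 2 * Real.sin (μ * t))) t :=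
    fun t => (((Real.hasDerivAt_cos _).comp t ((hasDerivAt_id t).const_mul μ)).const_mul
      (α * μ)).congr_deriv (by simp only [id]; ring)
  refine abs_le_mul_exp_sub_one_of_forced_oscillator hM hμ
    (fun t ht => (hη t ht).sub (hsin t).hasDerivWithinAt)
    (fun t ht => (hη' t ht).sub (hcos t).hasDerivWithinAt) (fun t ht => ?_) (by simp [h0])
    (by simp [α, div_mul_cancel₀ _ hμ.ne'])
  have hforce : η'' t - -(α * μ ^ 2 * Real.sin (μ * t)) + μ ^ 2 * (η t - α * Real.sin (μ * t))
      = ρ t * η t := by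
    rw [← hode t ht]
    ring
  rw [hforce, abs_mul, ← mul_add]
  gcongr
  · exact hρ t ht
  · have hαsin : |α * Real.sin (μ * t)| ≤ |α| := by
      simpa using mul_le_mul_of_nonneg_left (Real.abs_sin_le_one (μ * t)) (abs_nonneg α)
    linarith [abs_sub_abs_le_abs_sub (η t) (α * Real.sin (μ * t))]

theorem stmt18_general
    (Hb M : ℝ) (ρ : ℝ → ℝ)
    (hM : 0 ≤ M)
    (hρbdd : ∀ ξ ∈ Set.Icc (0:ℝ) Hb, |ρ ξ| ≤ M) :
    (∀ (μ : ℝ) (η η' η'' : ℝ → ℝ), 0 < μ →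
      (∀ ξ ∈ Set.Icc (0:ℝ) Hb, HasDerivWithinAt η (η' ξ) (Set.Icc (0:ℝ) Hb) ξ) →
      (∀ ξ ∈ Set.Icc (0:ℝ) Hb, HasDerivWithinAt η' (η'' ξ) (Set.Icc (0:ℝ) Hb) ξ) →
      ContinuousOn η'' (Set.Icc (0:ℝ) Hb) →
      (∀ ξ ∈ Set.Icc (0:ℝ) Hb, η'' ξ + μ ^ 2 * η ξ = ρ ξ * η ξ) →
      η 0 = 0 →
      ∀ ξ ∈ Set.Icc (0:ℝ) Hb,
        |η ξ - (η' 0 / μ) * Real.sin (μ * ξ)| ≤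
          |η' 0 / μ| * (Real.exp (M * ξ / μ) - 1)) ∧
    (∀ δ r : ℝ, 0 < δ → 0 ≤ r →
      ∃ μ₀ : ℝ, 0 < μ₀ ∧
        ∀ (μ : ℝ) (η η' η'' : ℝ → ℝ), μ₀ ≤ μ →
          (∀ ξ ∈ Set.Icc (0:ℝ) Hb, HasDerivWithinAt η (η' ξ) (Set.Icc (0:ℝ) Hb) ξ) →
          (∀ ξ ∈ Set.Icc (0:ℝ) Hb, HasDerivWithinAt η' (η'' ξ) (Set.Icc (0:ℝ) Hb) ξ) →
          ContinuousOn η'' (Set.Icc (0:ℝ) Hb) →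
          (∀ ξ ∈ Set.Icc (0:ℝ) Hb, η'' ξ + μ ^ 2 * η ξ = ρ ξ * η ξ) →
          η 0 = 0 → |η' 0 / μ| ≤ r →
          ∀ ξ ∈ Set.Icc (0:ℝ) Hb,
            |η ξ - (η' 0 / μ) * Real.sin (μ * ξ)| ≤ δ) := by
  refine ⟨fun μ η η' η'' hμ hη hη' _ hode h0 => abs_sub_mul_sin_le hM hρbdd hμ hη hη' hode h0,
    fun δ r hδ _ => ?_⟩
  obtain ⟨μ₀, hμ₀, hsmall⟩ := exists_forall_ge_mul_exp_div_sub_one_le hδ r (M * Hb)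
  refine ⟨μ₀, hμ₀, fun μ η η' η'' hμ hη hη' _ hode h0 hα ξ hξ => ?_⟩
  have hμpos : 0 < μ := hμ₀.trans_le hμ
  calc _ ≤ |η' 0 / μ| * (Real.exp (M * ξ / μ) - 1) :=
        abs_sub_mul_sin_le hM hρbdd hμpos hη hη' hode h0 ξ hξ
    _ ≤ r * (Real.exp (M * Hb / μ) - 1) := by
        have : 0 ≤ M * ξ / μ := by have := hξ.1; positivity
        gcongr
        · linarith [Real.add_one_le_exp (M * ξ / μ)]
        · exact hξ.2
    _ ≤ δ := hsmall μ hμ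

/-- Quantitative sinusoidal approximation for solutions of `η'' + μ² η = ρ η` with
`η(0) = 0`, `|ρ| ≤ M`: with `α = η'(0)/μ`, one has
`|η(ξ) − α sin(μξ)| ≤ |α| (e^{Mξ/μ} − 1)`, and hence for large `μ` the solution is
`δ`-close to `α sin(μξ)` on `[0, H̄]`. -/
theorem stmt18
    (Hb M : ℝ) (ρ : ℝ → ℝ)
    (hHb : 0 < Hb) (hM : 0 ≤ M)
    (hρcont : ContinuousOn ρ (Set.Icc (0:ℝ) Hb))
    (hρbdd : ∀ ξ ∈ Set.Icc (0:ℝ) Hb, |ρ ξ| ≤ M) :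
    (∀ (μ : ℝ) (η η' η'' : ℝ → ℝ), 0 < μ →
      (∀ ξ ∈ Set.Icc (0:ℝ) Hb, HasDerivWithinAt η (η' ξ) (Set.Icc (0:ℝ) Hb) ξ) →
      (∀ ξ ∈ Set.Icc (0:ℝ) Hb, HasDerivWithinAt η' (η'' ξ) (Set.Icc (0:ℝ) Hb) ξ) →
      ContinuousOn η'' (Set.Icc (0:ℝ) Hb) →
      (∀ ξ ∈ Set.Icc (0:ℝ) Hb, η'' ξ + μ ^ 2 * η ξ = ρ ξ * η ξ) →
      η 0 = 0 →
      ∀ ξ ∈ Set.Icc (0:ℝ) Hb,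
        |η ξ - (η' 0 / μ) * Real.sin (μ * ξ)| ≤
          |η' 0 / μ| * (Real.exp (M * ξ / μ) - 1)) ∧
    (∀ δ r : ℝ, 0 < δ → 0 ≤ r →
      ∃ μ₀ : ℝ, 0 < μ₀ ∧
        ∀ (μ : ℝ) (η η' η'' : ℝ → ℝ), μ₀ ≤ μ →
          (∀ ξ ∈ Set.Icc (0:ℝ) Hb, HasDerivWithinAt η (η' ξ) (Set.Icc (0:ℝ) Hb) ξ) →
          (∀ ξ ∈ Set.Icc (0:ℝ) Hb, HasDerivWithinAt η' (η'' ξ) (Set.Icc (0:ℝ) Hb) ξ) →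
          ContinuousOn η'' (Set.Icc (0:ℝ) Hb) →
          (∀ ξ ∈ Set.Icc (0:ℝ) Hb, η'' ξ + μ ^ 2 * η ξ = ρ ξ * η ξ) →
          η 0 = 0 → |η' 0 / μ| ≤ r →
          ∀ ξ ∈ Set.Icc (0:ℝ) Hb,
            |η ξ - (η' 0 / μ) * Real.sin (μ * ξ)| ≤ δ) :=
  stmt18_general Hb M ρ hM hρbdd
end

section
/- Let 0 < h₀ < h₁ < H, let 0 < c₀ < c₁ < c₂, let 0 < ε < (c₂ − c₁)/2, let μ > 0, and let λ satisfy (c₁ + ε) μ² < λ < (c₂ − ε) μ². Set ξ₀ = √(λ/c₀ − μ²), ξ₁ = √(λ/c₁ − μ²), ξ₂ = √(μ² − λ/c₂). Suppose real numbers a₀ ≠ 0, a₁, b₁, a₂ satisfy the transmission conditions: a₁ sin(ξ₁ h₀) + b₁ cos(ξ₁ h₀) = a₀ sin(ξ₀ h₀); ξ₁ (a₁ cos(ξ₁ h₀) − b₁ sin(ξ₁ h₀)) = a₀ ξ₀ cos(ξ₀ h₀); a₁ sin(ξ₁ h₁) + b₁ cos(ξ₁ h₁) = a₂ sinh(ξ₂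 (H − h₁)); ξ₁ (a₁ cos(ξ₁ h₁) − b₁ sin(ξ₁ h₁)) = −a₂ ξ₂ cosh(ξ₂ (H − h₁)). Then: (i) a₁² + b₁² = a₀² ( sin²(ξ₀ h₀) + (ξ₀/ξ₁)² cos²(ξ₀ h₀) ); (ii) a₁² + b₁² = a₂² ( sinh²(ξ₂ (H − h₁)) + (ξ₂/ξ₁)² cosh²(ξ₂ (H − h₁)) ); (iii) there exist constants M₁, M₂ > 0 depending only on ε, c₀, c₁, c₂ such that M₁ e^{−2 ξ₂ (H − h₁)} ≤ (a₂/a₀)² ≤ M₂ e^{−2 ξ₂ (H − h₁)}. -/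
open Set Real

set_option maxHeartbeats 1000000 in
/-- Two-jump piecewise constant coefficient: transmission relations and exponential
smallness of the amplitude in the top layer relative to the bottom layer. -/
theorem stmt19
    (ε c₀ c₁ c₂ : ℝ)
    (hc₀ : 0 < c₀) (h01 : c₀ < c₁) (h12 : c₁ < c₂)
    (hε : 0 < ε) (hε2 : ε < (c₂ - c₁) / 2) :
    ∃ M₁ : ℝ, 0 < M₁ ∧ ∃ M₂ : ℝ, 0 < M₂ ∧
      ∀ (h₀ h₁ H μ lam a₀ a₁ b₁ a₂ ξ₀ ξ₁ ξ₂ : ℝ),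
        0 < h₀ → h₀ < h₁ → h₁ < H → 0 < μ →
        (c₁ + ε) * μ ^ 2 < lam → lam < (c₂ - ε) * μ ^ 2 →
        a₀ ≠ 0 →
        ξ₀ = Real.sqrt (lam / c₀ - μ ^ 2) →
        ξ₁ = Real.sqrt (lam / c₁ - μ ^ 2) →
        ξ₂ = Real.sqrt (μ ^ 2 - lam / c₂) →
        a₁ * Real.sin (ξ₁ * h₀) + b₁ * Real.cos (ξ₁ * h₀) = a₀ * Real.sin (ξ₀ * h₀) →
        ξ₁ * (a₁ * Real.cos (ξ₁ * h₀) - b₁ * Real.sin (ξ₁ * h₀)) =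
          a₀ * ξ₀ * Real.cos (ξ₀ * h₀) →
        a₁ * Real.sin (ξ₁ * h₁) + b₁ * Real.cos (ξ₁ * h₁) =
          a₂ * Real.sinh (ξ₂ * (H - h₁)) →
        ξ₁ * (a₁ * Real.cos (ξ₁ * h₁) - b₁ * Real.sin (ξ₁ * h₁)) =
          -(a₂ * ξ₂ * Real.cosh (ξ₂ * (H - h₁))) →
        (a₁ ^ 2 + b₁ ^ 2 =
            a₀ ^ 2 * (Real.sin (ξ₀ * h₀) ^ 2 + (ξ₀ / ξ₁) ^ 2 * Real.cos (ξ₀ * h₀) ^ 2)) ∧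
        (a₁ ^ 2 + b₁ ^ 2 =
            a₂ ^ 2 * (Real.sinh (ξ₂ * (H - h₁)) ^ 2 +
              (ξ₂ / ξ₁) ^ 2 * Real.cosh (ξ₂ * (H - h₁)) ^ 2)) ∧
        (M₁ * Real.exp (-2 * ξ₂ * (H - h₁)) ≤ (a₂ / a₀) ^ 2 ∧
          (a₂ / a₀) ^ 2 ≤ M₂ * Real.exp (-2 * ξ₂ * (H - h₁))) := by
  have hc₁ : 0 < c₁ := hc₀.trans h01
  have hc₂ : 0 < c₂ := hc₁.trans h12
  have hd : 0 < c₂ - c₁ - ε := by linarith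
  have hc02 : c₀ < c₂ := h01.trans h12
  set K : ℝ := (c₂ - c₀) * c₁ / (c₀ * ε) with hKdef
  set R : ℝ := (c₂ - c₁ - ε) * c₁ / (ε * c₂) with hRdef
  set ρ : ℝ := ε * c₁ / (c₂ * (c₂ - c₁ - ε)) with hρdef
  have hKpos : 0 < K := div_pos (mul_pos (by linarith) hc₁) (mul_pos hc₀ hε)
  have hRpos : 0 < R := div_pos (mul_pos hd hc₁) (mul_pos hε hc₂)
  have hρpos : 0 < ρ := div_pos (mul_pos hε hc₁) (mul_pos hc₂ hd)
  refine ⟨1 / (1 + R), one_div_pos.mpr (by linarith), 4 * K / ρ,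
    div_pos (by linarith) hρpos, ?_⟩
  intro h₀ h₁ H μ lam a₀ a₁ b₁ a₂ ξ₀ ξ₁ ξ₂
  intro hh₀ hh01 hh1H hμ hlow hhigh ha₀ hξ₀def hξ₁def hξ₂def e1 e2 e3 e4
  have hμ2 : 0 < μ ^ 2 := by positivity
  have hεμ : 0 < ε * μ ^ 2 := mul_pos hε hμ2
  have hlam : 0 < lam := lt_trans (by positivity) hlow
  -- squares of the ξ's
  have h1nn : 0 ≤ lam / c₁ - μ ^ 2 := by
    have : μ ^ 2 ≤ lam / c₁ := (le_div_iff₀ hc₁).mpr (by nlinarith only [hlow, hεμ])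
    linarith
  have h0nn : 0 ≤ lam / c₀ - μ ^ 2 := by
    have h01' : lam / c₁ ≤ lam / c₀ := div_le_div_of_nonneg_left hlam.le hc₀ h01.le
    linarith
  have h2nn : 0 ≤ μ ^ 2 - lam / c₂ := by
    have : lam / c₂ ≤ μ ^ 2 := (div_le_iff₀ hc₂).mpr (by nlinarith only [hhigh, hεμ])
    linarith
  have hξ₀sq : ξ₀ ^ 2 = lam / c₀ - μ ^ 2 := by rw [hξ₀def, sq_sqrt h0nn]
  have hξ₁sq : ξ₁ ^ 2 = lam / c₁ - μ ^ 2 := by rw [hξ₁def, sq_sqrt h1nn]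
  have hξ₂sq : ξ₂ ^ 2 = μ ^ 2 - lam / c₂ := by rw [hξ₂def, sq_sqrt h2nn]
  have hξ₁pos : 0 < ξ₁ := by
    rw [hξ₁def, Real.sqrt_pos]
    have : μ ^ 2 < lam / c₁ := (lt_div_iff₀ hc₁).mpr (by nlinarith only [hlow, hεμ])
    linarith
  have hξ₂pos : 0 < ξ₂ := by
    rw [hξ₂def, Real.sqrt_pos]
    have : lam / c₂ < μ ^ 2 := (div_lt_iff₀ hc₂).mpr (by nlinarith only [hhigh, hεμ])
    linarith
  have hξ₀pos : 0 < ξ₀ := by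
    rw [hξ₀def, Real.sqrt_pos]
    have h1 : μ ^ 2 < lam / c₁ := (lt_div_iff₀ hc₁).mpr (by nlinarith only [hlow, hεμ])
    have h01' : lam / c₁ ≤ lam / c₀ := div_le_div_of_nonneg_left hlam.le hc₀ h01.le
    linarith
  have hξ₁ne : ξ₁ ≠ 0 := hξ₁pos.ne'
  -- multiplicative bounds
  have hB : c₁ * ξ₁ ^ 2 = lam - c₁ * μ ^ 2 := by rw [hξ₁sq]; field_simp
  have hA : c₀ * ξ₀ ^ 2 = lam - c₀ * μ ^ 2 := by rw [hξ₀sq]; field_simp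
  have hC : c₂ * ξ₂ ^ 2 = c₂ * μ ^ 2 - lam := by rw [hξ₂sq]; field_simp
  have hB_lb : ε * μ ^ 2 < c₁ * ξ₁ ^ 2 := by rw [hB]; nlinarith only [hlow]
  have hB_ub : c₁ * ξ₁ ^ 2 < (c₂ - c₁ - ε) * μ ^ 2 := by rw [hB]; nlinarith only [hhigh]
  have hA_ub : c₀ * ξ₀ ^ 2 < (c₂ - c₀) * μ ^ 2 := by
    rw [hA]; nlinarith only [hhigh, hεμ]
  have hC_lb : ε * μ ^ 2 < c₂ * ξ₂ ^ 2 := by rw [hC]; nlinarith only [hhigh]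
  have hC_ub : c₂ * ξ₂ ^ 2 < (c₂ - c₁ - ε) * μ ^ 2 := by rw [hC]; nlinarith only [hlow]
  -- ξ₁ ≤ ξ₀
  have hξ₁₀ : ξ₁ ≤ ξ₀ := by
    rw [hξ₀def, hξ₁def]
    apply Real.sqrt_le_sqrt
    have h01' : lam / c₁ ≤ lam / c₀ := div_le_div_of_nonneg_left hlam.le hc₀ h01.le
    linarith
  -- abbreviations
  set s0 := Real.sin (ξ₀ * h₀) with hs0def
  set c0 := Real.cos (ξ₀ * h₀) with hc0def
  set τ := ξ₂ * (H - h₁) with hτdef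
  have hτpos : 0 < τ := mul_pos hξ₂pos (by linarith)
  set N : ℝ := s0 ^ 2 + (ξ₀ / ξ₁) ^ 2 * c0 ^ 2 with hNdef
  set D : ℝ := Real.sinh τ ^ 2 + (ξ₂ / ξ₁) ^ 2 * Real.cosh τ ^ 2 with hDdef
  -- (i)
  have e2' : a₁ * Real.cos (ξ₁ * h₀) - b₁ * Real.sin (ξ₁ * h₀)
      = a₀ * ξ₀ * c0 / ξ₁ := (eq_div_iff hξ₁ne).mpr (by linarith [e2])
  have hpyth : Real.sin (ξ₁ * h₀) ^ 2 + Real.cos (ξ₁ * h₀) ^ 2 = 1 :=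
    Real.sin_sq_add_cos_sq _
  have partI : a₁ ^ 2 + b₁ ^ 2 = a₀ ^ 2 * N := by
    calc a₁ ^ 2 + b₁ ^ 2
        = (a₁ ^ 2 + b₁ ^ 2) * (Real.sin (ξ₁ * h₀) ^ 2 + Real.cos (ξ₁ * h₀) ^ 2) := by
          rw [hpyth]; ring
      _ = (a₁ * Real.sin (ξ₁ * h₀) + b₁ * Real.cos (ξ₁ * h₀)) ^ 2
          + (a₁ * Real.cos (ξ₁ * h₀) - b₁ * Real.sin (ξ₁ * h₀)) ^ 2 := by ring
      _ = (a₀ * s0) ^ 2 + (a₀ * ξ₀ * c0 / ξ₁) ^ 2 := by rw [e1, e2']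
      _ = a₀ ^ 2 * N := by rw [hNdef]; ring
  have e4' : a₁ * Real.cos (ξ₁ * h₁) - b₁ * Real.sin (ξ₁ * h₁)
      = -(a₂ * ξ₂ * Real.cosh τ) / ξ₁ := (eq_div_iff hξ₁ne).mpr (by linarith [e4])
  have hpyth1 : Real.sin (ξ₁ * h₁) ^ 2 + Real.cos (ξ₁ * h₁) ^ 2 = 1 :=
    Real.sin_sq_add_cos_sq _
  have partII : a₁ ^ 2 + b₁ ^ 2 = a₂ ^ 2 * D := by
    calc a₁ ^ 2 + b₁ ^ 2
        = (a₁ ^ 2 + b₁ ^ 2) * (Real.sin (ξ₁ * h₁) ^ 2 + Real.cos (ξ₁ * h₁) ^ 2) := by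
          rw [hpyth1]; ring
      _ = (a₁ * Real.sin (ξ₁ * h₁) + b₁ * Real.cos (ξ₁ * h₁)) ^ 2
          + (a₁ * Real.cos (ξ₁ * h₁) - b₁ * Real.sin (ξ₁ * h₁)) ^ 2 := by ring
      _ = (a₂ * Real.sinh τ) ^ 2 + (-(a₂ * ξ₂ * Real.cosh τ) / ξ₁) ^ 2 := by rw [e3, e4']
      _ = a₂ ^ 2 * D := by rw [hDdef]; ring
  -- bounds on N
  have hq1 : 1 ≤ (ξ₀ / ξ₁) ^ 2 := by
    have hdiv : 1 ≤ ξ₀ / ξ₁ := (one_le_div hξ₁pos).mpr hξ₁₀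
    nlinarith only [hdiv]
  have hqK : (ξ₀ / ξ₁) ^ 2 ≤ K := by
    rw [div_pow, hKdef, div_le_div_iff₀ (by positivity) (by positivity)]
    calc ξ₀ ^ 2 * (c₀ * ε) = c₀ * ξ₀ ^ 2 * ε := by ring
      _ ≤ (c₂ - c₀) * μ ^ 2 * ε := mul_le_mul_of_nonneg_right hA_ub.le hε.le
      _ = (c₂ - c₀) * (ε * μ ^ 2) := by ring
      _ ≤ (c₂ - c₀) * (c₁ * ξ₁ ^ 2) :=
          mul_le_mul_of_nonneg_left hB_lb.le (by linarith)
      _ = (c₂ - c₀) * c₁ * ξ₁ ^ 2 := by ring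
  have hpyth0 : s0 ^ 2 + c0 ^ 2 = 1 := Real.sin_sq_add_cos_sq _
  have hN1 : 1 ≤ N := by
    rw [hNdef]; nlinarith only [hpyth0, sq_nonneg c0, hq1]
  have hNK : N ≤ K := by
    rw [hNdef]; nlinarith only [hpyth0, sq_nonneg s0, sq_nonneg c0, hq1, hqK]
  -- bounds on (ξ₂/ξ₁)²
  have hrρ : ρ ≤ (ξ₂ / ξ₁) ^ 2 := by
    rw [div_pow, hρdef, div_le_div_iff₀ (by positivity) (by positivity)]
    calc ε * c₁ * ξ₁ ^ 2 = ε * (c₁ * ξ₁ ^ 2) := by ring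
      _ ≤ ε * ((c₂ - c₁ - ε) * μ ^ 2) := mul_le_mul_of_nonneg_left hB_ub.le hε.le
      _ = (c₂ - c₁ - ε) * (ε * μ ^ 2) := by ring
      _ ≤ (c₂ - c₁ - ε) * (c₂ * ξ₂ ^ 2) := mul_le_mul_of_nonneg_left hC_lb.le hd.le
      _ = ξ₂ ^ 2 * (c₂ * (c₂ - c₁ - ε)) := by ring
  have hrR : (ξ₂ / ξ₁) ^ 2 ≤ R := by
    rw [div_pow, hRdef, div_le_div_iff₀ (by positivity) (by positivity)]
    calc ξ₂ ^ 2 * (ε * c₂) = ε * (c₂ * ξ₂ ^ 2) := by ring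
      _ ≤ ε * ((c₂ - c₁ - ε) * μ ^ 2) := mul_le_mul_of_nonneg_left hC_ub.le hε.le
      _ = (c₂ - c₁ - ε) * (ε * μ ^ 2) := by ring
      _ ≤ (c₂ - c₁ - ε) * (c₁ * ξ₁ ^ 2) := mul_le_mul_of_nonneg_left hB_lb.le hd.le
      _ = (c₂ - c₁ - ε) * c₁ * ξ₁ ^ 2 := by ring
  -- hyperbolic estimates
  have hsh_nn : 0 ≤ Real.sinh τ := Real.sinh_nonneg_iff.mpr hτpos.le
  have hsh_ch : Real.sinh τ ≤ Real.cosh τ := (Real.sinh_lt_cosh τ).le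
  have hch_pos : 0 < Real.cosh τ := Real.cosh_pos τ
  have hexp_pos : 0 < Real.exp τ := Real.exp_pos τ
  have hch_le : Real.cosh τ ≤ Real.exp τ := by
    rw [Real.cosh_eq]
    have : Real.exp (-τ) ≤ Real.exp τ := Real.exp_le_exp.mpr (by linarith)
    linarith
  have hch_ge : Real.exp τ ≤ 2 * Real.cosh τ := by
    rw [Real.cosh_eq]
    have : 0 < Real.exp (-τ) := Real.exp_pos _
    linarith
  have hE : Real.exp τ ^ 2 = Real.exp (2 * τ) := by
    rw [← Real.exp_nat_mul]; norm_num
  set E := Real.exp (2 * τ) with hEdef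
  have hEpos : 0 < E := Real.exp_pos _
  have hD_ub : D ≤ (1 + R) * E := by
    rw [hDdef, ← hE]
    have t1 : Real.sinh τ ^ 2 ≤ Real.exp τ ^ 2 :=
      pow_le_pow_left₀ hsh_nn (hsh_ch.trans hch_le) 2
    have t2 : Real.cosh τ ^ 2 ≤ Real.exp τ ^ 2 := pow_le_pow_left₀ hch_pos.le hch_le 2
    have t3 : (ξ₂ / ξ₁) ^ 2 * Real.cosh τ ^ 2 ≤ R * Real.exp τ ^ 2 :=
      mul_le_mul hrR t2 (by positivity) hRpos.le
    nlinarith only [t1, t3]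
  have hD_lb : ρ / 4 * E ≤ D := by
    rw [hDdef, ← hE]
    have t4 : Real.exp τ ^ 2 ≤ (2 * Real.cosh τ) ^ 2 :=
      pow_le_pow_left₀ hexp_pos.le hch_ge 2
    have t5 : ρ * Real.exp τ ^ 2 ≤ (ξ₂ / ξ₁) ^ 2 * (2 * Real.cosh τ) ^ 2 :=
      mul_le_mul hrρ t4 (by positivity) (by positivity)
    nlinarith only [t5, sq_nonneg (Real.sinh τ)]
  have hDpos : 0 < D := lt_of_lt_of_le (by positivity) hD_lb
  have ha₀2 : 0 < a₀ ^ 2 := by positivity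
  have hkey : a₂ ^ 2 * D = a₀ ^ 2 * N := by linarith [partI, partII]
  have hexp' : Real.exp (-2 * ξ₂ * (H - h₁)) = E⁻¹ := by
    rw [hEdef, ← Real.exp_neg, hτdef]; ring_nf
  refine ⟨partI, partII, ?_, ?_⟩
  · -- lower bound
    rw [div_pow, hexp', le_div_iff₀ ha₀2]
    have key1 : 1 / (1 + R) * E⁻¹ * D ≤ N := by
      have h1 : 1 / (1 + R) * E⁻¹ * D ≤ 1 / (1 + R) * E⁻¹ * ((1 + R) * E) :=
        mul_le_mul_of_nonneg_left hD_ub (by positivity)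
      calc 1 / (1 + R) * E⁻¹ * D ≤ 1 / (1 + R) * E⁻¹ * ((1 + R) * E) := h1
        _ = 1 := by field_simp
        _ ≤ N := hN1
    have chain : (1 / (1 + R) * E⁻¹ * a₀ ^ 2) * D ≤ a₂ ^ 2 * D := by
      calc (1 / (1 + R) * E⁻¹ * a₀ ^ 2) * D
          = (1 / (1 + R) * E⁻¹ * D) * a₀ ^ 2 := by ring
        _ ≤ N * a₀ ^ 2 := mul_le_mul_of_nonneg_right key1 ha₀2.le
        _ = a₂ ^ 2 * D := by rw [hkey]; ring
    exact le_of_mul_le_mul_right chain hDpos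
  · -- upper bound
    rw [div_pow, hexp', div_le_iff₀ ha₀2]
    have key2 : N ≤ 4 * K / ρ * E⁻¹ * D := by
      have h1 : 4 * K / ρ * E⁻¹ * (ρ / 4 * E) ≤ 4 * K / ρ * E⁻¹ * D :=
        mul_le_mul_of_nonneg_left hD_lb (by positivity)
      calc N ≤ K := hNK
        _ = 4 * K / ρ * E⁻¹ * (ρ / 4 * E) := by field_simp
        _ ≤ 4 * K / ρ * E⁻¹ * D := h1
    have chain : a₂ ^ 2 * D ≤ (4 * K / ρ * E⁻¹ * a₀ ^ 2) * D := by
      calc a₂ ^ 2 * D = N * a₀ ^ 2 := by rw [hkey]; ring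
        _ ≤ (4 * K / ρ * E⁻¹ * D) * a₀ ^ 2 := mul_le_mul_of_nonneg_right key2 ha₀2.le
        _ = (4 * K / ρ * E⁻¹ * a₀ ^ 2) * D := by ring
    exact le_of_mul_le_mul_right chain hDpos
end
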